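/- Let r > 0 and consider two identical spheres of radius r at separation ε > 0. Then C₁₁(ε) + C₁₂(ε) converges to 4πr·log 2 as ε → 0⁺. -/

import Mathlib

open Real Filter Topology

/-- The parameter α̃(ε) = √(ε(r + ε/4)) for two identical spheres of radius `r`. -/
noncomputable def alphaTilde (r ε : ℝ) : ℝ := Real.sqrt (ε * (r + ε / 4))

/-- The bispherical coordinate ξ₀(ε) = arsinh(α̃(ε)/r) of the sphere boundaries. -/
noncomputable def xi0 (r ε : ℝ) : ℝ := Real.arsinh (alphaTilde r ε / r)

/-- The capacitance coefficient C₁₁ for two identical spheres of radius `r`. -/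
noncomputable def C11sym (r ε : ℝ) : ℝ :=
  8 * π * alphaTilde r ε *
    ∑' n : ℕ, Real.exp ((2 * n + 1) * xi0 r ε) /
      (Real.exp (2 * (2 * n + 1) * xi0 r ε) - 1)

/-- The capacitance coefficient C₁₂ for two identical spheres of radius `r`. -/
noncomputable def C12sym (r ε : ℝ) : ℝ :=
  -(8 * π * alphaTilde r ε *
    ∑' n : ℕ, 1 / (Real.exp (2 * (2 * n + 1) * xi0 r ε) - 1))

/-!
Since `eˣ/(e²ˣ - 1) - 1/(e²ˣ - 1) = 1/(eˣ + 1)`, the sum `C₁₁ + C₁₂` equals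
`8πα̃ ∑ₙ 1/(e^{(2n+1)ξ₀} + 1)`. Multiplied by `2ξ₀`, this series is a Riemann sum with step `2ξ₀`
of the decreasing function `1/(eᵘ + 1)`, whose antiderivative `-log (1 + e⁻ᵘ)` tends to `0`
at infinity. Comparing each term with the integral over an adjacent step traps `2ξ₀ ∑ₙ …` between
`log (1 + e^{-ξ₀})` and `log (1 + e^{-ξ₀}) + 2ξ₀/(e^{ξ₀} + 1)`, so `ξ₀ ∑ₙ … → (log 2)/2`.
Finally `ξ₀ = arsinh (α̃/r) ~ α̃/r`, so `α̃/ξ₀ → r`.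
-/

open Finset

section Antitone

variable {f G : ℝ → ℝ}

theorem Antitone.mul_sub_le_image_sub_of_hasDerivAt (hf : Antitone f)
    (hG : ∀ x, HasDerivAt G (f x) x) {a b : ℝ} (hab : a ≤ b) :
    f b * (b - a) ≤ G b - G a :=
  (convex_Icc a b).mul_sub_le_image_sub_of_le_deriv
    (fun x _ => (hG x).continuousAt.continuousWithinAt)
    (fun x _ => (hG x).differentiableAt.differentiableWithinAt)
    (fun x hx => by rw [interior_Icc] at hx; rw [(hG x).deriv]; exact hf hx.2.le)
    a ⟨le_rfl, hab⟩ b ⟨hab, le_rfl⟩ hab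

theorem Antitone.image_sub_le_mul_sub_of_hasDerivAt (hf : Antitone f)
    (hG : ∀ x, HasDerivAt G (f x) x) {a b : ℝ} (hab : a ≤ b) :
    G b - G a ≤ f a * (b - a) :=
  (convex_Icc a b).image_sub_le_mul_sub_of_deriv_le
    (fun x _ => (hG x).continuousAt.continuousWithinAt)
    (fun x _ => (hG x).differentiableAt.differentiableWithinAt)
    (fun x hx => by rw [interior_Icc] at hx; rw [(hG x).deriv]; exact hf hx.1.le)
    a ⟨le_rfl, hab⟩ b ⟨hab, le_rfl⟩ hab

variable {a h : ℝ}

theorem sub_eq_sum_range_sub (G : ℝ → ℝ) (a h : ℝ) (N : ℕ) :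
    G (a + N * h) - G a = ∑ n ∈ range N, (G (a + (n + 1) * h) - G (a + n * h)) := by
  simpa using (sum_range_sub (fun n : ℕ => G (a + n * h)) N).symm

theorem Antitone.mul_sum_range_succ_le_sub_of_hasDerivAt (hf : Antitone f)
    (hG : ∀ x, HasDerivAt G (f x) x) (hh : 0 ≤ h) (N : ℕ) :
    h * ∑ n ∈ range N, f (a + (n + 1) * h) ≤ G (a + N * h) - G a := by
  rw [sub_eq_sum_range_sub, mul_sum]
  refine sum_le_sum fun n _ => ?_
  have := hf.mul_sub_le_image_sub_of_hasDerivAt hG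
    (show a + n * h ≤ a + (n + 1) * h by nlinarith)
  linarith

theorem Antitone.sub_le_mul_sum_range_of_hasDerivAt (hf : Antitone f)
    (hG : ∀ x, HasDerivAt G (f x) x) (hh : 0 ≤ h) (N : ℕ) :
    G (a + N * h) - G a ≤ h * ∑ n ∈ range N, f (a + n * h) := by
  rw [sub_eq_sum_range_sub, mul_sum]
  refine sum_le_sum fun n _ => ?_
  have := hf.image_sub_le_mul_sub_of_hasDerivAt hG
    (show a + n * h ≤ a + (n + 1) * h by nlinarith)
  linarith

variable {L : ℝ}

theorem le_of_hasDerivAt_nonneg_of_tendsto (hf₀ : ∀ x, 0 ≤ f x)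
    (hG : ∀ x, HasDerivAt G (f x) x) (hGL : Tendsto G atTop (𝓝 L)) (x : ℝ) : G x ≤ L :=
  (monotone_of_hasDerivAt_nonneg hG hf₀).ge_of_tendsto hGL x

theorem Antitone.sum_range_succ_le_of_hasDerivAt (hf : Antitone f) (hf₀ : ∀ x, 0 ≤ f x)
    (hG : ∀ x, HasDerivAt G (f x) x) (hGL : Tendsto G atTop (𝓝 L)) (hh : 0 < h) (N : ℕ) :
    ∑ n ∈ range N, f (a + (n + 1) * h) ≤ (L - G a) / h := by
  rw [le_div_iff₀' hh]
  linarith [hf.mul_sum_range_succ_le_sub_of_hasDerivAt (a := a) hG hh.le N,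
    le_of_hasDerivAt_nonneg_of_tendsto hf₀ hG hGL (a + N * h)]

theorem Antitone.summable_of_hasDerivAt (hf : Antitone f) (hf₀ : ∀ x, 0 ≤ f x)
    (hG : ∀ x, HasDerivAt G (f x) x) (hGL : Tendsto G atTop (𝓝 L)) (hh : 0 < h) :
    Summable (fun n : ℕ => f (a + n * h)) := by
  rw [← summable_nat_add_iff 1]
  simpa using summable_of_sum_range_le (fun _ => hf₀ _)
    (hf.sum_range_succ_le_of_hasDerivAt hf₀ hG hGL hh)

theorem Antitone.mul_tsum_le_of_hasDerivAt (hf : Antitone f) (hf₀ : ∀ x, 0 ≤ f x)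
    (hG : ∀ x, HasDerivAt G (f x) x) (hGL : Tendsto G atTop (𝓝 L)) (hh : 0 < h) :
    h * ∑' n : ℕ, f (a + n * h) ≤ L - G a + h * f a := by
  have htail : h * ∑' n : ℕ, f (a + (n + 1 : ℕ) * h) ≤ L - G a :=
    (le_div_iff₀' hh).1 <| Real.tsum_le_of_sum_range_le (fun _ => hf₀ _) <| by
      simpa using hf.sum_range_succ_le_of_hasDerivAt hf₀ hG hGL hh
  rw [(hf.summable_of_hasDerivAt hf₀ hG hGL hh).tsum_eq_zero_add]
  simp only [Nat.cast_zero, zero_mul, add_zero]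
  linarith

theorem Antitone.sub_le_mul_tsum_of_hasDerivAt (hf : Antitone f) (hf₀ : ∀ x, 0 ≤ f x)
    (hG : ∀ x, HasDerivAt G (f x) x) (hGL : Tendsto G atTop (𝓝 L)) (hh : 0 < h) :
    L - G a ≤ h * ∑' n : ℕ, f (a + n * h) := by
  have hlim : Tendsto (fun N : ℕ => G (a + N * h) - G a) atTop (𝓝 (L - G a)) :=
    (hGL.comp (tendsto_atTop_add_const_left _ _
      (tendsto_natCast_atTop_atTop.atTop_mul_const hh))).sub_const _
  refine le_of_tendsto' hlim fun N => ?_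
  calc G (a + N * h) - G a ≤ h * ∑ n ∈ range N, f (a + n * h) :=
        hf.sub_le_mul_sum_range_of_hasDerivAt hG hh.le N
    _ ≤ h * ∑' n : ℕ, f (a + n * h) :=
        mul_le_mul_of_nonneg_left ((hf.summable_of_hasDerivAt hf₀ hG hGL hh).sum_le_tsum _
          fun _ _ => hf₀ _) hh.le

end Antitone

theorem hasDerivAt_neg_log_one_add_exp_neg (x : ℝ) :
    HasDerivAt (fun u => -log (1 + exp (-u))) (exp x + 1)⁻¹ x := by
  have h : HasDerivAt (fun u => -log (1 + exp (-u))) (-(exp (-x) * -1 / (1 + exp (-x)))) x :=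
    ((((hasDerivAt_neg x).exp).const_add 1).log (by positivity)).neg
  convert h using 1
  rw [exp_neg]
  field_simp

theorem antitone_inv_exp_add_one : Antitone fun u : ℝ => (exp u + 1)⁻¹ :=
  fun _ _ hxy => inv_anti₀ (by positivity) (by gcongr)

theorem tendsto_neg_log_one_add_exp_neg_atTop :
    Tendsto (fun u : ℝ => -log (1 + exp (-u))) atTop (𝓝 0) := by
  have h := ((tendsto_exp_neg_atTop_nhds_zero.const_add 1).log (by norm_num)).neg
  simpa using h

theorem summable_inv_exp_odd_mul_add_one {t : ℝ} (ht : 0 < t) :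
    Summable fun n : ℕ => (exp ((2 * n + 1) * t) + 1)⁻¹ := by
  have h := antitone_inv_exp_add_one.summable_of_hasDerivAt (a := t) (fun _ => by positivity)
    hasDerivAt_neg_log_one_add_exp_neg tendsto_neg_log_one_add_exp_neg_atTop
    (by positivity : 0 < 2 * t)
  convert h using 5; ring

theorem tendsto_mul_tsum_inv_exp_odd_mul_add_one :
    Tendsto (fun t : ℝ => t * ∑' n : ℕ, (exp ((2 * n + 1) * t) + 1)⁻¹) (𝓝[>] 0)
      (𝓝 (log 2 / 2)) := by
  have hodd : ∀ (t : ℝ) (n : ℕ), (2 * (n : ℝ) + 1) * t = t + n * (2 * t) := fun _ _ => by ring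
  have hlim : ∀ c : ℝ, Tendsto (fun t : ℝ => (log (1 + exp (-t)) + c * t * (exp t + 1)⁻¹) / 2)
      (𝓝[>] 0) (𝓝 (log 2 / 2)) := fun c => by
    have hcont : Continuous fun t : ℝ => (log (1 + exp (-t)) + c * t * (exp t + 1)⁻¹) / 2 := by
      fun_prop (disch := intros; positivity)
    simpa [one_add_one_eq_two] using
      (hcont.tendsto 0).mono_left (nhdsWithin_le_nhds (s := Set.Ioi 0))
  refine tendsto_of_tendsto_of_tendsto_of_le_of_le' (by simpa using hlim 0) (hlim 2) ?_ ?_ <;>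
    filter_upwards [self_mem_nhdsWithin] with t (ht : 0 < t) <;> simp_rw [hodd t]
  · have := antitone_inv_exp_add_one.sub_le_mul_tsum_of_hasDerivAt (a := t)
      (fun _ => by positivity) hasDerivAt_neg_log_one_add_exp_neg
      tendsto_neg_log_one_add_exp_neg_atTop (by positivity : 0 < 2 * t)
    linarith
  · have := antitone_inv_exp_add_one.mul_tsum_le_of_hasDerivAt (a := t)
      (fun _ => by positivity) hasDerivAt_neg_log_one_add_exp_neg
      tendsto_neg_log_one_add_exp_neg_atTop (by positivity : 0 < 2 * t)
    linarith

theorem exp_two_mul_sub_one (x : ℝ) : exp (2 * x) - 1 = (exp x - 1) * (exp x + 1) := by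
  rw [two_mul, exp_add]; ring

theorem exp_div_exp_two_mul_sub_one {x : ℝ} (hx : x ≠ 0) :
    exp x / (exp (2 * x) - 1) = 1 / (exp (2 * x) - 1) + (exp x + 1)⁻¹ := by
  have : exp x - 1 ≠ 0 := sub_ne_zero.2 (mt (exp_eq_one_iff x).1 hx)
  rw [exp_two_mul_sub_one]
  field_simp
  ring

theorem one_div_exp_two_mul_sub_one {x : ℝ} (hx : x ≠ 0) :
    1 / (exp (2 * x) - 1) = (exp x + 1)⁻¹ / (exp x - 1) := by
  have : exp x - 1 ≠ 0 := sub_ne_zero.2 (mt (exp_eq_one_iff x).1 hx)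
  rw [exp_two_mul_sub_one]
  field_simp

theorem tsum_exp_div_sub_tsum_one_div {t : ℝ} (ht : 0 < t) :
    (∑' n : ℕ, exp ((2 * n + 1) * t) / (exp (2 * (2 * n + 1) * t) - 1)) -
        ∑' n : ℕ, 1 / (exp (2 * (2 * n + 1) * t) - 1) =
      ∑' n : ℕ, (exp ((2 * n + 1) * t) + 1)⁻¹ := by
  have hx : ∀ n : ℕ, t ≤ (2 * n + 1) * t := fun n => by nlinarith [n.cast_nonneg (α := ℝ)]
  have hx0 : ∀ n : ℕ, (2 * (n : ℝ) + 1) * t ≠ 0 := fun n => (ht.trans_le (hx n)).ne'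
  simp_rw [mul_assoc (2 : ℝ), exp_div_exp_two_mul_sub_one (hx0 _)]
  have hF := summable_inv_exp_odd_mul_add_one ht
  have hB : Summable fun n : ℕ => 1 / (exp (2 * ((2 * n + 1) * t)) - 1) := by
    refine (hF.div_const (exp t - 1)).of_nonneg_of_le (fun n => ?_) (fun n => ?_) <;>
      rw [one_div_exp_two_mul_sub_one (hx0 n)]
    · have : 0 < exp ((2 * n + 1) * t) - 1 := sub_pos.2 (one_lt_exp_iff.2 (ht.trans_le (hx n)))
      positivity
    · exact div_le_div_of_nonneg_left (by positivity) (sub_pos.2 (one_lt_exp_iff.2 ht))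
        (by gcongr; exact hx n)
  rw [hB.tsum_add hF]
  ring

theorem C11sym_add_C12sym {r ε : ℝ} (hξ : 0 < xi0 r ε) :
    C11sym r ε + C12sym r ε =
      8 * π * alphaTilde r ε * ∑' n : ℕ, (exp ((2 * n + 1) * xi0 r ε) + 1)⁻¹ := by
  rw [C11sym, C12sym, ← tsum_exp_div_sub_tsum_one_div hξ]
  ring

theorem tendsto_div_arsinh_nhdsNE : Tendsto (fun x : ℝ => x / arsinh x) (𝓝[≠] 0) (𝓝 1) := by
  have h := (hasDerivAt_iff_tendsto_slope.1 (hasDerivAt_arsinh 0)).inv₀ (by norm_num)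
  simpa [slope_fun_def_field] using h

theorem tendsto_alphaTilde_div_nhdsGT {r : ℝ} (hr : 0 < r) :
    Tendsto (fun ε => alphaTilde r ε / r) (𝓝[>] 0) (𝓝[>] 0) := by
  refine tendsto_nhdsWithin_of_tendsto_nhds_of_eventually_within _ ?_ ?_
  · have h : Continuous fun ε => alphaTilde r ε / r := by unfold alphaTilde; fun_prop
    simpa [alphaTilde] using (h.tendsto 0).mono_left (nhdsWithin_le_nhds (s := Set.Ioi 0))
  · filter_upwards [self_mem_nhdsWithin] with ε (hε : 0 < ε)
    exact div_pos (sqrt_pos.2 (by positivity)) hr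

theorem tendsto_xi0_nhdsGT {r : ℝ} (hr : 0 < r) : Tendsto (xi0 r) (𝓝[>] 0) (𝓝[>] 0) := by
  have hu := tendsto_alphaTilde_div_nhdsGT hr
  refine tendsto_nhdsWithin_of_tendsto_nhds_of_eventually_within _ ?_ ?_
  · have h := (continuous_arsinh.tendsto 0).comp (hu.mono_right nhdsWithin_le_nhds)
    rwa [arsinh_zero] at h
  · filter_upwards [hu self_mem_nhdsWithin] with ε (hε : 0 < alphaTilde r ε / r)
    exact arsinh_pos_iff.2 hε

theorem tendsto_alphaTilde_div_xi0 {r : ℝ} (hr : 0 < r) :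
    Tendsto (fun ε => alphaTilde r ε / xi0 r ε) (𝓝[>] 0) (𝓝 r) := by
  have h := (tendsto_div_arsinh_nhdsNE.comp
    ((tendsto_alphaTilde_div_nhdsGT hr).mono_right (nhdsGT_le_nhdsNE 0))).const_mul r
  rw [mul_one] at h
  refine h.congr fun ε => ?_
  rw [Function.comp_apply, xi0, mul_div_assoc', mul_div_cancel₀ _ hr.ne']

theorem C11_add_C12_tendsto (r : ℝ) (hr : 0 < r) :
    Tendsto (fun ε => C11sym r ε + C12sym r ε) (𝓝[>] (0 : ℝ))
      (𝓝 (4 * π * r * Real.log 2)) := by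
  have hξ := tendsto_xi0_nhdsGT hr
  have hlim := ((tendsto_alphaTilde_div_xi0 hr).mul
    (tendsto_mul_tsum_inv_exp_odd_mul_add_one.comp hξ)).const_mul (8 * π)
  rw [show 4 * π * r * log 2 = 8 * π * (r * (log 2 / 2)) by ring]
  refine hlim.congr' ?_
  filter_upwards [hξ self_mem_nhdsWithin] with ε (hε : 0 < xi0 r ε)
  rw [C11sym_add_C12sym hε, Function.comp_apply]
  field_simp
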